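/- arXiv:1603.06122 — 2 statements merged into one kernel-verified Lean document; each statement's English description precedes it below -/
import Mathlib

section
/- Let (f,C) be a low-defect pair of degree r, and let x_{i₁},…,x_{i_s} be the variables of f that are minimal with respect to the nesting order. Then, holding the other coordinates fixed at any values, δ_{f,C}(k₁,…,k_r) tends to δ(f,C) as k_{i₁},…,k_{i_s} all tend to infinity; that is, for every ε > 0 there is K such that whenever k_{i_j} ≥ K for all j = 1,…,s, one has δ(f,C) − ε < δ_{f,C}(k₁,…,k_r) ≤ δ(f,C). -/
/-- `CpxW n k` : the positive integer `n` can be written using exactly `k` ones,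
with an arbitrary combination of additions and multiplications. -/
inductive CpxW : ℕ → ℕ → Prop
  | one : CpxW 1 1
  | add {a b m n : ℕ} : CpxW a m → CpxW b n → CpxW (a + b) (m + n)
  | mul {a b m n : ℕ} : CpxW a m → CpxW b n → CpxW (a * b) (m + n)

/-- The integer complexity `‖n‖`: the least number of 1's needed to write `n`
using additions and multiplications. -/
noncomputable def cpx (n : ℕ) : ℕ := sInf {k | CpxW n k}

/-- The defect `δ(n) = ‖n‖ - 3 log₃ n`. -/
noncomputable def defect (n : ℕ) : ℝ := (cpx n : ℝ) - 3 * Real.logb 3 (n : ℝ)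

/-- `LDP r f C` : `(f, C)` is a low-defect pair of degree `r`; here a low-defect
polynomial of degree `r` is written in the variables `X 0, …, X (r-1)`. -/
inductive LDP : ℕ → MvPolynomial ℕ ℤ → ℕ → Prop
  | const (k C : ℕ) (hk : 0 < k) (hC : cpx k ≤ C) :
      LDP 0 (MvPolynomial.C (k : ℤ)) C
  | mul {r₁ r₂ : ℕ} {f₁ f₂ : MvPolynomial ℕ ℤ} {C₁ C₂ : ℕ} :
      LDP r₁ f₁ C₁ → LDP r₂ f₂ C₂ →
      LDP (r₁ + r₂) (f₁ * MvPolynomial.rename (· + r₁) f₂) (C₁ + C₂)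
  | step {r : ℕ} {f : MvPolynomial ℕ ℤ} {C : ℕ} (c D : ℕ) (hc : 0 < c) (hD : cpx c ≤ D) :
      LDP r f C → LDP (r + 1) (f * MvPolynomial.X r + MvPolynomial.C (c : ℤ)) (C + D)

/-- A low-defect polynomial: the first component of some low-defect pair. -/
def LowDefectPoly (f : MvPolynomial ℕ ℤ) : Prop := ∃ r C, LDP r f C

/-- The leading coefficient of a low-defect polynomial of degree `r`:
the coefficient of `x₁ ⋯ x_r`. -/
noncomputable def leadCoeff (r : ℕ) (f : MvPolynomial ℕ ℤ) : ℤ :=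
  MvPolynomial.coeff (∑ i ∈ Finset.range r, Finsupp.single i 1) f

/-- The defect `δ(f,C) = C - 3 log₃ a` of a low-defect pair of degree `r`,
where `a` is the leading coefficient. -/
noncomputable def pairDft (r : ℕ) (f : MvPolynomial ℕ ℤ) (C : ℕ) : ℝ :=
  (C : ℝ) - 3 * Real.logb 3 ((leadCoeff r f : ℤ) : ℝ)

/-- `f(3^{k₁}, …, 3^{k_r})` for a polynomial of degree `r`. -/
noncomputable def eval3 (r : ℕ) (f : MvPolynomial ℕ ℤ) (k : ℕ → ℕ) : ℤ :=
  MvPolynomial.eval (fun i => if i < r then (3 : ℤ) ^ (k i) else 1) f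

/-- `δ_{f,C}(k₁,…,k_r) = C + 3(k₁+⋯+k_r) - 3 log₃ f(3^{k₁},…,3^{k_r})`. -/
noncomputable def dftF (r : ℕ) (f : MvPolynomial ℕ ℤ) (C : ℕ) (k : ℕ → ℕ) : ℝ :=
  (C : ℝ) + 3 * (∑ i ∈ Finset.range r, (k i : ℝ))
    - 3 * Real.logb 3 ((eval3 r f k : ℤ) : ℝ)

/-- The nesting order: `NestLe f i j` means `xᵢ ⪯ xⱼ`, i.e. every monomial of `f`
divisible by `xᵢ` is divisible by `xⱼ`. -/
def NestLe (f : MvPolynomial ℕ ℤ) (i j : ℕ) : Prop :=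
  ∀ m ∈ f.support, m i ≠ 0 → m j ≠ 0

/-- `xᵢ` is a variable of (the degree-`r` polynomial) `f` that is minimal with
respect to the nesting order. -/
def IsMinVar (r : ℕ) (f : MvPolynomial ℕ ℤ) (i : ℕ) : Prop :=
  i < r ∧ ∀ j < r, NestLe f j i → NestLe f i j

/-- Substituting `3^k` for the variable `xᵢ` of `f`, renumbering the later
variables down by one. -/
noncomputable def truncAt (f : MvPolynomial ℕ ℤ) (i k : ℕ) : MvPolynomial ℕ ℤ :=
  MvPolynomial.aeval (fun j => if j < i then MvPolynomial.X j
    else if j = i then MvPolynomial.C ((3 : ℤ) ^ k) else MvPolynomial.X (j - 1)) f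

/-- A direct truncation of a "pair with degree" `(r, f, C)`: substitute `3^k`
into a variable of `f` minimal in the nesting order. -/
def DirectTrunc (a b : ℕ × MvPolynomial ℕ ℤ × ℕ) : Prop :=
  ∃ i k : ℕ, a.1 = b.1 + 1 ∧ IsMinVar a.1 a.2.1 i ∧
    b.2.1 = truncAt a.2.1 i k ∧ b.2.2 = a.2.2 + 3 * k

/-- `n` is a leader: either `3 ∤ n`, or `3 ∣ n` and `‖n‖ < ‖n/3‖ + 3`. -/
def IsLeader (n : ℕ) : Prop := 0 < n ∧ (3 ∣ n → cpx n < cpx (n / 3) + 3)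

/-- `(f, C)` (of degree `r`) efficiently 3-represents `n`. -/
def EffRep (r : ℕ) (f : MvPolynomial ℕ ℤ) (C : ℕ) (n : ℕ) : Prop :=
  ∃ k : ℕ → ℕ, (n : ℤ) = eval3 r f k ∧ cpx n = C + 3 * ∑ i ∈ Finset.range r, k i

/-- The number of `∗`-entries (free coordinates) of `p` among `0, …, r-1`. -/
def starCount (r : ℕ) (p : ℕ → Option ℕ) : ℕ :=
  ((Finset.range r).filter (fun i => p i = none)).card

/-- The 3-substitution of a tuple `p ∈ (ℤ≥0 ∪ {∗})^r` into `f`: substitute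
`3^{kᵢ}` for `xᵢ` whenever `p i = some kᵢ`, renumbering the surviving variables
in increasing order. -/
noncomputable def subst3 (f : MvPolynomial ℕ ℤ) (p : ℕ → Option ℕ) : MvPolynomial ℕ ℤ :=
  MvPolynomial.aeval (fun j =>
    match p j with
    | some k => MvPolynomial.C ((3 : ℤ) ^ k)
    | none => MvPolynomial.X (((Finset.range j).filter (fun i => p i = none)).card)) f

/-- The insertion map `ι` associated to `p`: inserts the arguments into the
coordinates of `p` equal to `∗`. -/
def iotaMap (p : ℕ → Option ℕ) (ℓ : ℕ → ℕ) : ℕ → ℕ := fun j =>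
  match p j with
  | some k => k
  | none => ℓ (((Finset.range j).filter (fun i => p i = none)).card)


/-!
Write `f(3^k) = a·3^N + ∑_{m ≠ x₁⋯x_r} c_m 3^{⟨m,k⟩}` with `a` the leading coefficient and
`N = k₁ + ⋯ + k_r`. Along the construction of a low-defect pair all coefficients stay nonnegative
and every monomial stays squarefree in `x₁, …, x_r`. A non-leading monomial misses some variable,
hence misses a minimal variable `xᵢ` below it in the nesting order, so its term is at most
`c_m 3^{N - kᵢ}`. Thus `a·3^N ≤ f(3^k) ≤ (a + S·3^{-K})·3^N`, where `S` is the sum of the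
non-leading coefficients, and `δ_{f,C}(k) = δ(f,C) - 3 log₃ ρ` with `1 ≤ ρ ≤ 1 + (S/a)·3^{-K}`.
-/

open MvPolynomial

noncomputable def onesBelow (r : ℕ) : ℕ →₀ ℕ := ∑ i ∈ Finset.range r, Finsupp.single i 1

lemma onesBelow_apply (r j : ℕ) : onesBelow r j = if j < r then 1 else 0 := by
  simp [onesBelow, Finsupp.finsetSum_apply, Finsupp.single_apply]

lemma onesBelow_succ (r : ℕ) : onesBelow (r + 1) = onesBelow r + Finsupp.single r 1 :=
  Finset.sum_range_succ _ _

lemma onesBelow_add (r₁ r₂ : ℕ) :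
    onesBelow (r₁ + r₂) = onesBelow r₁ + Finsupp.mapDomain (· + r₁) (onesBelow r₂) := by
  simp only [onesBelow, Finset.sum_range_add, Finsupp.mapDomain_finsetSum,
    Finsupp.mapDomain_single, add_comm _ r₁]

lemma add_single_le_onesBelow {r i : ℕ} {m : ℕ →₀ ℕ} (hm : m ≤ onesBelow r) (hi : i < r)
    (hmi : m i = 0) : m + Finsupp.single i 1 ≤ onesBelow r := by
  intro j
  obtain rfl | hij := eq_or_ne i j
  · simp [hmi, onesBelow_apply, hi]
  · simpa [Finsupp.single_apply, hij] using hm j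

lemma weight_onesBelow (k : ℕ → ℕ) (r : ℕ) :
    Finsupp.weight k (onesBelow r) = ∑ i ∈ Finset.range r, k i := by
  simp [onesBelow, map_sum, Finsupp.weight_single]

lemma MvPolynomial.coeff_mul_le_coeff_add {σ R : Type*} [CommSemiring R] [PartialOrder R]
    [IsOrderedRing R] {p q : MvPolynomial σ R} (hp : ∀ m, 0 ≤ p.coeff m)
    (hq : ∀ m, 0 ≤ q.coeff m) (m n : σ →₀ ℕ) :
    p.coeff m * q.coeff n ≤ (p * q).coeff (m + n) := by
  classical
  have hmem : (m, n) ∈ Finset.HasAntidiagonal.antidiagonal (m + n) :=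
    Finset.HasAntidiagonal.mem_antidiagonal.mpr rfl
  rw [coeff_mul]
  exact Finset.single_le_sum (f := fun x => p.coeff x.1 * q.coeff x.2)
    (fun x _ => mul_nonneg (hp x.1) (hq x.2)) hmem

lemma MvPolynomial.coeff_map_natCast_nonneg {σ : Type*} (g : MvPolynomial σ ℕ) (m : σ →₀ ℕ) :
    0 ≤ (map (Nat.castRingHom ℤ) g).coeff m := by
  rw [coeff_map]
  exact Int.natCast_nonneg _

def monomialsWith (f : MvPolynomial ℕ ℤ) (i : ℕ) : Finset (ℕ →₀ ℕ) :=
  f.support.filter fun m => m i ≠ 0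

lemma nestLe_iff_subset {f : MvPolynomial ℕ ℤ} {i j : ℕ} :
    NestLe f i j ↔ monomialsWith f i ⊆ monomialsWith f j := by
  simp only [NestLe, monomialsWith, Finset.subset_iff, Finset.mem_filter]
  exact ⟨fun h m hm => ⟨hm.1, h m hm.1 hm.2⟩, fun h m hm hmi => (h ⟨hm, hmi⟩).2⟩

lemma exists_isMinVar_nestLe (f : MvPolynomial ℕ ℤ) {r j : ℕ} (hj : j < r) :
    ∃ i, IsMinVar r f i ∧ NestLe f i j := by
  obtain ⟨i, ⟨hir, hij⟩, hmin⟩ := Set.Finite.exists_minimalFor (monomialsWith f)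
    {l | l < r ∧ NestLe f l j} ((Set.finite_lt_nat r).subset fun l hl => hl.1)
    ⟨j, hj, nestLe_iff_subset.mpr subset_rfl⟩
  refine ⟨i, ⟨hir, fun l hl hli => ?_⟩, hij⟩
  rw [nestLe_iff_subset] at hij hli ⊢
  exact hmin ⟨hl, nestLe_iff_subset.mpr (hli.trans hij)⟩ hli

lemma exists_eq_zero_of_lt_onesBelow {r : ℕ} {m : ℕ →₀ ℕ} (h : m < onesBelow r) :
    ∃ j < r, m j = 0 := by
  by_contra! hm
  refine h.not_ge fun j => ?_
  rw [onesBelow_apply]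
  split_ifs with hj
  · exact Nat.one_le_iff_ne_zero.mpr (hm j hj)
  · exact Nat.zero_le _

lemma weight_add_le_of_le_onesBelow (k : ℕ → ℕ) {r i : ℕ} {m : ℕ →₀ ℕ}
    (hm : m ≤ onesBelow r) (hi : i < r) (hmi : m i = 0) :
    Finsupp.weight k m + k i ≤ ∑ j ∈ Finset.range r, k j := by
  obtain ⟨d, hd⟩ := le_iff_exists_add.mp (add_single_le_onesBelow hm hi hmi)
  rw [← weight_onesBelow, hd, map_add, map_add, Finsupp.weight_single, one_smul]
  exact Nat.le_add_right _ _

lemma eval3_monomial {r : ℕ} {m : ℕ →₀ ℕ} (hm : m ≤ onesBelow r) (k : ℕ → ℕ) :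
    ∏ i ∈ m.support, (if i < r then (3 : ℤ) ^ k i else 1) ^ m i = 3 ^ Finsupp.weight k m := by
  rw [Finsupp.weight_apply, Finsupp.sum, ← Finset.prod_pow_eq_pow_sum]
  refine Finset.prod_congr rfl fun i hi => ?_
  have hir : i < r := by
    by_contra hir
    have := hm i
    rw [onesBelow_apply, if_neg hir] at this
    exact Finsupp.mem_support_iff.mp hi (Nat.le_zero.mp this)
  rw [if_pos hir, smul_eq_mul, ← pow_mul, mul_comm]

lemma exists_logb_one_add_mul_inv_pow_lt {b : ℝ} (hb : 1 < b) (t : ℝ) {ε : ℝ} (hε : 0 < ε) :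
    ∃ K : ℕ, Real.logb b (1 + t * b⁻¹ ^ K) < ε := by
  have hpow : Filter.Tendsto (fun K : ℕ => b⁻¹ ^ K) Filter.atTop (nhds 0) :=
    tendsto_pow_atTop_nhds_zero_of_lt_one (by positivity) (inv_lt_one_of_one_lt₀ hb)
  have hlim : Filter.Tendsto (fun K : ℕ => Real.logb b (1 + t * b⁻¹ ^ K)) Filter.atTop
      (nhds (Real.logb b (1 + t * 0))) :=
    (Real.continuousAt_logb (by norm_num)).tendsto.comp ((hpow.const_mul t).const_add 1)
  rw [mul_zero, add_zero, Real.logb_one] at hlim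
  exact (hlim.eventually (gt_mem_nhds hε)).exists

namespace LDP

variable {r : ℕ} {f : MvPolynomial ℕ ℤ} {C : ℕ}

lemma exists_map_natCast (h : LDP r f C) :
    ∃ g : MvPolynomial ℕ ℕ, map (Nat.castRingHom ℤ) g = f := by
  induction h with
  | const k => exact ⟨MvPolynomial.C k, by simp⟩
  | mul _ _ ih₁ ih₂ =>
    obtain ⟨g₁, rfl⟩ := ih₁
    obtain ⟨g₂, rfl⟩ := ih₂
    exact ⟨g₁ * rename _ g₂, by rw [map_mul, map_rename]⟩
  | @step r' _ _ c _ _ _ _ ih =>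
    obtain ⟨g, rfl⟩ := ih
    exact ⟨g * X r' + MvPolynomial.C c, by simp⟩

lemma coeff_nonneg (h : LDP r f C) (m : ℕ →₀ ℕ) : 0 ≤ f.coeff m := by
  obtain ⟨g, rfl⟩ := h.exists_map_natCast
  exact coeff_map_natCast_nonneg g m

lemma le_onesBelow_of_mem_support (h : LDP r f C) {m : ℕ →₀ ℕ} (hm : m ∈ f.support) :
    m ≤ onesBelow r := by
  classical
  induction h generalizing m with
  | const k =>
    simp [Finset.mem_singleton.mp (support_monomial_subset hm)]
  | @mul r₁ r₂ _ _ _ _ _ _ ih₁ ih₂ =>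
    obtain ⟨m₁, hm₁, m₂', hm₂', rfl⟩ := Finset.mem_add.mp (support_mul _ _ hm)
    rw [support_rename_of_injective (add_left_injective r₁)] at hm₂'
    obtain ⟨m₂, hm₂, rfl⟩ := Finset.mem_image.mp hm₂'
    rw [onesBelow_add]
    exact add_le_add (ih₁ hm₁) (Finsupp.mapDomain_mono (ih₂ hm₂))
  | @step r' _ _ _ _ _ _ _ ih =>
    rcases Finset.mem_union.mp (support_add hm) with hm | hm
    · rw [support_mul_X] at hm
      obtain ⟨m', hm', rfl⟩ := Finset.mem_map.mp hm
      rw [onesBelow_succ]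
      exact add_le_add_left (ih hm') _
    · simp [Finset.mem_singleton.mp (support_monomial_subset hm)]

lemma leadCoeff_pos (h : LDP r f C) : 0 < leadCoeff r f := by
  induction h with
  | const k _ hk =>
    rw [leadCoeff, Finset.sum_range_zero, coeff_C, if_pos rfl]
    exact_mod_cast hk
  | @mul r₁ r₂ _ _ _ _ h₁ h₂ ih₁ ih₂ =>
    obtain ⟨g₂, rfl⟩ := h₂.exists_map_natCast
    have hrename : ∀ m, 0 ≤ (rename (· + r₁) (map (Nat.castRingHom ℤ) g₂)).coeff m := by
      rw [← map_rename]; exact coeff_map_natCast_nonneg _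
    have hlead := coeff_mul_le_coeff_add h₁.coeff_nonneg hrename (onesBelow r₁)
      (Finsupp.mapDomain (· + r₁) (onesBelow r₂))
    rw [coeff_rename_mapDomain _ (add_left_injective r₁)] at hlead
    rw [leadCoeff, ← onesBelow, onesBelow_add]
    exact lt_of_lt_of_le (mul_pos ih₁ ih₂) hlead
  | @step r' _ _ _ _ _ _ _ ih =>
    have hne : onesBelow r' + Finsupp.single r' 1 ≠ 0 := by simp
    rw [leadCoeff, ← onesBelow, onesBelow_succ, coeff_add, coeff_mul_X, coeff_C,
      if_neg hne.symm, add_zero]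
    exact ih

lemma exists_isMinVar_eq_zero (h : LDP r f C) {m : ℕ →₀ ℕ} (hm : m ∈ f.support)
    (hne : m ≠ onesBelow r) : ∃ i, IsMinVar r f i ∧ m i = 0 := by
  obtain ⟨j, hj, hmj⟩ :=
    exists_eq_zero_of_lt_onesBelow (lt_of_le_of_ne (h.le_onesBelow_of_mem_support hm) hne)
  obtain ⟨i, hi, hij⟩ := exists_isMinVar_nestLe f hj
  exact ⟨i, hi, by_contra fun hmi => hij m hm hmi hmj⟩

lemma eval3_eq_leadCoeff_add (h : LDP r f C) (k : ℕ → ℕ) :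
    eval3 r f k = leadCoeff r f * 3 ^ ∑ i ∈ Finset.range r, k i +
      ∑ m ∈ f.support.erase (onesBelow r), f.coeff m * 3 ^ Finsupp.weight k m := by
  have hlead : onesBelow r ∈ f.support := mem_support_iff.mpr h.leadCoeff_pos.ne'
  rw [eval3, eval_eq, ← Finset.add_sum_erase _ _ hlead, ← weight_onesBelow]
  congr 1
  · rw [eval3_monomial le_rfl]; rfl
  · exact Finset.sum_congr rfl fun m hm => by
      rw [eval3_monomial (h.le_onesBelow_of_mem_support (Finset.mem_of_mem_erase hm))]

lemma leadCoeff_mul_le_eval3 (h : LDP r f C) (k : ℕ → ℕ) :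
    leadCoeff r f * 3 ^ ∑ i ∈ Finset.range r, k i ≤ eval3 r f k := by
  rw [h.eval3_eq_leadCoeff_add]
  exact le_add_of_nonneg_right
    (Finset.sum_nonneg fun m _ => mul_nonneg (h.coeff_nonneg m) (by positivity))

lemma pow_mul_eval3_le (h : LDP r f C) {K : ℕ} {k : ℕ → ℕ}
    (hk : ∀ i < r, IsMinVar r f i → K ≤ k i) :
    3 ^ K * eval3 r f k ≤ 3 ^ K * (leadCoeff r f * 3 ^ ∑ i ∈ Finset.range r, k i) +
      (∑ m ∈ f.support.erase (onesBelow r), f.coeff m) * 3 ^ ∑ i ∈ Finset.range r, k i := by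
  rw [h.eval3_eq_leadCoeff_add, mul_add, Finset.mul_sum, Finset.sum_mul]
  refine add_le_add le_rfl (Finset.sum_le_sum fun m hm => ?_)
  obtain ⟨hne, hm⟩ := Finset.mem_erase.mp hm
  obtain ⟨i, hi, hmi⟩ := h.exists_isMinVar_eq_zero hm hne
  have hw := weight_add_le_of_le_onesBelow k (h.le_onesBelow_of_mem_support hm) hi.1 hmi
  calc 3 ^ K * (f.coeff m * 3 ^ Finsupp.weight k m)
      = f.coeff m * 3 ^ (Finsupp.weight k m + K) := by ring
    _ ≤ f.coeff m * 3 ^ ∑ i ∈ Finset.range r, k i := by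
      gcongr
      · exact h.coeff_nonneg m
      · norm_num
      · exact le_trans (by have := hk i hi.1 hi; omega) hw

lemma dftF_eq_pairDft_sub (h : LDP r f C) (k : ℕ → ℕ) :
    dftF r f C k = pairDft r f C - 3 * Real.logb 3
      (eval3 r f k / (leadCoeff r f * 3 ^ ∑ i ∈ Finset.range r, k i)) := by
  have ha : (0 : ℝ) < leadCoeff r f := by exact_mod_cast h.leadCoeff_pos
  have hlow : (leadCoeff r f : ℝ) * 3 ^ ∑ i ∈ Finset.range r, k i ≤ eval3 r f k := by
    exact_mod_cast h.leadCoeff_mul_le_eval3 k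
  have hE : (0 : ℝ) < eval3 r f k := lt_of_lt_of_le (by positivity) hlow
  rw [dftF, pairDft, Real.logb_div hE.ne' (by positivity), Real.logb_mul ha.ne' (by positivity),
    Real.logb_pow, Real.logb_self_eq_one (by norm_num)]
  push_cast
  ring

lemma one_le_eval3_div (h : LDP r f C) (k : ℕ → ℕ) :
    1 ≤ (eval3 r f k : ℝ) / (leadCoeff r f * 3 ^ ∑ i ∈ Finset.range r, k i) := by
  have ha : (0 : ℝ) < leadCoeff r f := by exact_mod_cast h.leadCoeff_pos
  rw [one_le_div (by positivity)]
  exact_mod_cast h.leadCoeff_mul_le_eval3 k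

lemma eval3_div_le (h : LDP r f C) {K : ℕ} {k : ℕ → ℕ}
    (hk : ∀ i < r, IsMinVar r f i → K ≤ k i) :
    (eval3 r f k : ℝ) / (leadCoeff r f * 3 ^ ∑ i ∈ Finset.range r, k i) ≤
      1 + (∑ m ∈ f.support.erase (onesBelow r), f.coeff m : ℤ) / (leadCoeff r f : ℝ) * 3⁻¹ ^ K := by
  have ha : (0 : ℝ) < leadCoeff r f := by exact_mod_cast h.leadCoeff_pos
  have hup : (3 : ℝ) ^ K * eval3 r f k ≤
      3 ^ K * (leadCoeff r f * 3 ^ ∑ i ∈ Finset.range r, k i) +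
        (∑ m ∈ f.support.erase (onesBelow r), f.coeff m : ℤ) * 3 ^ ∑ i ∈ Finset.range r, k i := by
    exact_mod_cast h.pow_mul_eval3_le hk
  rw [div_le_iff₀ (by positivity), inv_pow, ← mul_le_mul_iff_right₀ (pow_pos three_pos K)]
  refine hup.trans_eq ?_
  field_simp

end LDP

/-- `δ_{f,C}` tends to `δ(f,C)` as the coordinates at the
variables minimal in the nesting order tend to infinity, the others being fixed. -/
theorem dft_tendsto_pairDft (r : ℕ) (f : MvPolynomial ℕ ℤ) (C : ℕ) (hf : LDP r f C)
    (base : ℕ → ℕ) (ε : ℝ) (hε : 0 < ε) :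
    ∃ K : ℕ, ∀ k : ℕ → ℕ,
      (∀ i < r, ¬ IsMinVar r f i → k i = base i) →
      (∀ i < r, IsMinVar r f i → K ≤ k i) →
      pairDft r f C - ε < dftF r f C k ∧ dftF r f C k ≤ pairDft r f C := by
  obtain ⟨K, hK⟩ := exists_logb_one_add_mul_inv_pow_lt (b := 3) (by norm_num)
    ((∑ m ∈ f.support.erase (onesBelow r), f.coeff m : ℤ) / (leadCoeff r f : ℝ))
    (div_pos hε three_pos)
  refine ⟨K, fun k _ hk => ?_⟩
  have hρ_ge := hf.one_le_eval3_div k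
  have hlog_nonneg := Real.logb_nonneg (b := 3) (by norm_num) hρ_ge
  have hlog_lt := (Real.logb_le_logb_of_le (b := 3) (by norm_num) (zero_lt_one.trans_le hρ_ge)
    (hf.eval3_div_le hk)).trans_lt hK
  rw [hf.dftF_eq_pairDft_sub]
  constructor <;> linarith
end

section
/- Let (f,C) be a low-defect pair of degree k, and let a be the leading coefficient of f. Then C ≥ ‖a‖ + k. Equivalently, if f is a low-defect polynomial of degree k with leading coefficient a, then ‖f‖ ≥ ‖a‖ + k, where ‖f‖ is the least C such that (f,C) is a low-defect pair. -/
/-- `‖f‖` : the least `C` such that `(f, C)` is a low-defect pair. -/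
noncomputable def polyCpx (f : MvPolynomial ℕ ℤ) : ℕ := sInf {C | ∃ r, LDP r f C}

/-!
Every low-defect polynomial of degree `r` is multilinear in `x₀, …, x_{r-1}`, so its leading
coefficient is read off the top monomial `x₀ ⋯ x_{r-1}` and is multiplicative under `⊗`: for
multilinear factors the top monomial of a product arises only as the product of the top
monomials. Along the three constructors the cost `C` therefore dominates `‖a‖ + r`: constants
pay `‖k‖`, products pay `‖a₁‖ + ‖a₂‖ ≥ ‖a₁a₂‖`, and each step `f ⊗ x + c` leaves `a` unchanged
while paying `‖c‖ ≥ 1` for the new variable. Multilinearity also pins down the degree of `f`,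
so the bound passes to `‖f‖`.
-/

open MvPolynomial

theorem CpxW.ones_pos {n k : ℕ} (h : CpxW n k) : 0 < k := by
  induction h <;> omega

theorem cpxW_self {n : ℕ} (hn : 0 < n) : CpxW n n := by
  induction n with
  | zero => omega
  | succ m ih =>
    rcases Nat.eq_zero_or_pos m with rfl | hm
    · exact CpxW.one
    · exact CpxW.add (ih hm) CpxW.one

theorem cpxW_cpx {n : ℕ} (hn : 0 < n) : CpxW n (cpx n) :=
  Nat.sInf_mem ⟨n, cpxW_self hn⟩

theorem cpx_pos {n : ℕ} (hn : 0 < n) : 0 < cpx n :=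
  (cpxW_cpx hn).ones_pos

theorem cpx_mul_le {a b : ℕ} (ha : 0 < a) (hb : 0 < b) : cpx (a * b) ≤ cpx a + cpx b :=
  Nat.sInf_le (CpxW.mul (cpxW_cpx ha) (cpxW_cpx hb))

theorem MvPolynomial.coeff_add_mul_of_support_le {σ R : Type*} [CommSemiring R]
    {p q : MvPolynomial σ R} {s t : σ →₀ ℕ}
    (hp : ∀ m ∈ p.support, m ≤ s) (hq : ∀ m ∈ q.support, m ≤ t) :
    coeff (s + t) (p * q) = coeff s p * coeff t q := by
  classical
  rw [coeff_mul, Finset.sum_eq_single (s, t)]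
  · rintro ⟨m₁, m₂⟩ hm hne
    rw [Finset.HasAntidiagonal.mem_antidiagonal] at hm
    by_contra hprod
    have h₁ := hp m₁ (mem_support_iff.mpr (left_ne_zero_of_mul hprod))
    have h₂ := hq m₂ (mem_support_iff.mpr (right_ne_zero_of_mul hprod))
    obtain ⟨rfl, rfl⟩ := (add_eq_add_iff_eq_and_eq h₁ h₂).mp hm
    exact hne rfl
  · simp

theorem MvPolynomial.support_rename_le_mapDomain {σ τ R : Type*} [CommSemiring R]
    {p : MvPolynomial σ R} {s : σ →₀ ℕ} (g : σ → τ) (hp : ∀ m ∈ p.support, m ≤ s) :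
    ∀ m ∈ (rename g p).support, m ≤ s.mapDomain g := by
  intro m hm
  obtain ⟨n, rfl, hn⟩ := coeff_rename_ne_zero g p m (mem_support_iff.mp hm)
  exact Finsupp.mapDomain_mono (hp n (mem_support_iff.mpr hn))

noncomputable def topMonomial (r : ℕ) : ℕ →₀ ℕ :=
  ∑ i ∈ Finset.range r, Finsupp.single i 1

theorem topMonomial_apply (r i : ℕ) : topMonomial r i = if i < r then 1 else 0 := by
  simp [topMonomial, Finsupp.finsetSum_apply, Finsupp.single_apply]

theorem topMonomial_succ (r : ℕ) :
    topMonomial (r + 1) = topMonomial r + Finsupp.single r 1 :=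
  Finset.sum_range_succ _ _

theorem topMonomial_add (r₁ r₂ : ℕ) :
    topMonomial (r₁ + r₂) = topMonomial r₁ + (topMonomial r₂).mapDomain (· + r₁) := by
  rw [topMonomial, topMonomial, topMonomial, Finset.sum_range_add, Finsupp.mapDomain_finsetSum]
  simp only [Finsupp.mapDomain_single, add_comm r₁]

theorem le_of_topMonomial_le {r r' : ℕ} (h : topMonomial r' ≤ topMonomial r) : r' ≤ r := by
  by_contra! hlt
  have := h r
  simp only [topMonomial_apply, lt_irrefl, hlt, if_true, if_false] at this
  omega

theorem leadCoeff_eq_coeff (r : ℕ) (f : MvPolynomial ℕ ℤ) :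
    leadCoeff r f = coeff (topMonomial r) f := rfl

namespace LDP

variable {r : ℕ} {f : MvPolynomial ℕ ℤ} {C : ℕ}

theorem support_le_topMonomial (h : LDP r f C) : ∀ m ∈ f.support, m ≤ topMonomial r := by
  induction h with
  | const k C =>
    intro m hm
    rw [Finset.mem_singleton.mp (support_monomial_subset hm)]
    exact zero_le
  | @mul r₁ r₂ f₁ f₂ C₁ C₂ _ _ ih₁ ih₂ =>
    intro m hm
    obtain ⟨m₁, hm₁, m₂, hm₂, rfl⟩ := Finset.mem_add.mp (support_mul _ _ hm)
    rw [topMonomial_add]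
    exact add_le_add (ih₁ m₁ hm₁) (support_rename_le_mapDomain _ ih₂ m₂ hm₂)
  | @step r f C c D _ _ _ ih =>
    intro m hm
    rcases Finset.mem_union.mp (support_add hm) with hm | hm
    · rw [support_mul_X] at hm
      obtain ⟨n, hn, rfl⟩ := Finset.mem_map.mp hm
      rw [topMonomial_succ]
      exact add_le_add_left (ih n hn) _
    · rw [Finset.mem_singleton.mp (support_monomial_subset hm)]
      exact zero_le

theorem exists_leadCoeff_eq (h : LDP r f C) :
    ∃ a : ℕ, 0 < a ∧ leadCoeff r f = a ∧ cpx a + r ≤ C := by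
  induction h with
  | const k C hk hC =>
    refine ⟨k, hk, ?_, hC⟩
    rw [leadCoeff_eq_coeff, topMonomial, Finset.sum_range_zero, coeff_zero_C]
  | @mul r₁ r₂ f₁ f₂ C₁ C₂ h₁ h₂ ih₁ ih₂ =>
    obtain ⟨a₁, ha₁, hlead₁, hC₁⟩ := ih₁
    obtain ⟨a₂, ha₂, hlead₂, hC₂⟩ := ih₂
    refine ⟨a₁ * a₂, Nat.mul_pos ha₁ ha₂, ?_, ?_⟩
    · rw [leadCoeff_eq_coeff, topMonomial_add,
        coeff_add_mul_of_support_le h₁.support_le_topMonomial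
          (support_rename_le_mapDomain _ h₂.support_le_topMonomial),
        coeff_rename_mapDomain _ (add_left_injective r₁), ← leadCoeff_eq_coeff,
        ← leadCoeff_eq_coeff, hlead₁, hlead₂, Nat.cast_mul]
    · have := cpx_mul_le ha₁ ha₂
      omega
  | @step r f C c D hc _ _ ih =>
    obtain ⟨a, ha, hlead, hC⟩ := ih
    have htop : topMonomial (r + 1) ≠ 0 := by
      rw [topMonomial_succ]
      exact fun h => Finsupp.single_ne_zero.mpr one_ne_zero (add_eq_zero.mp h).2
    refine ⟨a, ha, ?_, ?_⟩
    · rw [leadCoeff_eq_coeff, coeff_add, coeff_C, if_neg htop.symm, add_zero,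
        topMonomial_succ, coeff_mul_X, ← leadCoeff_eq_coeff, hlead]
    · have := cpx_pos hc
      omega

theorem degree_eq {r' C' : ℕ} (h : LDP r f C) (h' : LDP r' f C') : r = r' := by
  have top_mem : ∀ {r C}, LDP r f C → topMonomial r ∈ f.support := fun h => by
    obtain ⟨a, ha, hlead, -⟩ := h.exists_leadCoeff_eq
    rw [mem_support_iff, ← leadCoeff_eq_coeff, hlead]
    exact_mod_cast ha.ne'
  exact le_antisymm (le_of_topMonomial_le (h'.support_le_topMonomial _ (top_mem h)))
    (le_of_topMonomial_le (h.support_le_topMonomial _ (top_mem h')))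

theorem cpx_leadCoeff_add_le (h : LDP r f C) {a : ℕ} (ha : leadCoeff r f = a) :
    cpx a + r ≤ C := by
  obtain ⟨a', -, ha', hC⟩ := h.exists_leadCoeff_eq
  rwa [show a = a' by exact_mod_cast ha.symm.trans ha']

end LDP

/-- For a low-defect pair `(f,C)` of degree `k` with leading
coefficient `a`, `C ≥ ‖a‖ + k`; equivalently `‖f‖ ≥ ‖a‖ + k`. -/
theorem pair_cpx_lower_bound (k : ℕ) (f : MvPolynomial ℕ ℤ) (C : ℕ) (hf : LDP k f C)
    (a : ℕ) (ha : leadCoeff k f = (a : ℤ)) :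
    cpx a + k ≤ C ∧ cpx a + k ≤ polyCpx f := by
  refine ⟨hf.cpx_leadCoeff_add_le ha, ?_⟩
  obtain ⟨r, hr⟩ : polyCpx f ∈ {C' | ∃ r, LDP r f C'} := Nat.sInf_mem ⟨C, k, hf⟩
  obtain rfl := hf.degree_eq hr
  exact hr.cpx_leadCoeff_add_le ha
end
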